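/- Let V be a Jordan bimodule over Kan(n). If a is an even homogeneous basis element of Kan(n) of the form e_I or \bar{e_I} with a ≠ 1 and a ≠ \bar{e_i} for any single index i, then R_a^3 = 0 on V. -/
import Mathlib


open Finset in
/-- The Grassmann algebra `G_n` on `n` odd generators, realized as coefficient
functions on subsets of `{1,...,n}` (the basis is `e_I`, `I ⊆ {1,...,n}`). -/
abbrev Gn (n : ℕ) (F : Type) := Finset (Fin n) → F

/-- The sign `(-1)^{#{(i,j) ∈ I×J : j < i}}` arising when multiplying `e_I · e_J`. -/
def gsign {n : ℕ} (I J : Finset (Fin n)) : ℤ :=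
  (-1) ^ (((I ×ˢ J).filter (fun p => p.2 < p.1)).card)

/-- Multiplication in the Grassmann algebra `G_n`. -/
def gmul {F : Type} [Field F] {n : ℕ} (f g : Gn n F) : Gn n F :=
  fun K => ∑ I ∈ K.powerset, (gsign I (K \ I) : F) * f I * g (K \ I)

/-- The odd superderivation `∂/∂e_j` of `G_n`. -/
def pd {F : Type} [Field F] {n : ℕ} (j : Fin n) (f : Gn n F) : Gn n F :=
  fun I => if j ∈ I then 0 else ((-1 : F) ^ ((I.filter (fun i => i < j)).card)) * f (insert j I)

/-- The grade involution of `G_n`: `e_I ↦ (-1)^{|I|} e_I`. -/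
def gInv {F : Type} [Field F] {n : ℕ} (f : Gn n F) : Gn n F :=
  fun I => ((-1 : F) ^ I.card) * f I

/-- The Poisson bracket `{f,g} = (-1)^{|f|} ∑_i (∂f/∂e_i)(∂g/∂e_i)` of `G_n`
(the sign `(-1)^{|f|}` is incorporated bilinearly via the grade involution). -/
def gbr {F : Type} [Field F] {n : ℕ} (f g : Gn n F) : Gn n F :=
  ∑ i : Fin n, gmul (pd i (gInv f)) (pd i g)

/-- `f ∈ G_n` is homogeneous of parity `p`. -/
def homog {F : Type} [Field F] {n : ℕ} (p : ZMod 2) (f : Gn n F) : Prop :=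
  ∀ I : Finset (Fin n), ((I.card : ZMod 2) ≠ p) → f I = 0

/-- `(-1)^p` as an element of the field `F`, for `p : ZMod 2`. -/
def sgn (F : Type) [Field F] (p : ZMod 2) : F := if p = 0 then 1 else -1
/-- The Kantor double `Kan(n) = J(G_n) = G_n ⊕ \bar{G_n}`: an element `(a,b)`
represents `a + \bar{b}`. -/
abbrev Kan (n : ℕ) (F : Type) := Gn n F × Gn n F

/-- Multiplication of the Kantor double `Kan(n)`; the signs `(-1)^{|g|}` of the
Kantor doubling process are incorporated bilinearly via the grade involution. -/
def kmul {F : Type} [Field F] {n : ℕ} (x y : Kan n F) : Kan n F :=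
  (gmul x.1 y.1 + gbr x.2 (gInv y.2), gmul x.1 y.2 + gmul x.2 (gInv y.1))

/-- The basis element `e_I` of `G_n` (coefficient `1` at `I`). -/
def single {F : Type} [Field F] {n : ℕ} (I : Finset (Fin n)) : Gn n F :=
  fun J => if J = I then 1 else 0

/-- The element `e_I ∈ Kan(n)`. -/
def eK {F : Type} [Field F] {n : ℕ} (I : Finset (Fin n)) : Kan n F := (single I, 0)

/-- The element `\bar{e_I} ∈ Kan(n)`. In particular `beK ∅ = \bar{1}`. -/
def beK {F : Type} [Field F] {n : ℕ} (I : Finset (Fin n)) : Kan n F := (0, single I)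

/-- Homogeneity of parity `p` in `Kan(n)` (the bar flips parity). -/
def kHomog {F : Type} [Field F] {n : ℕ} (p : ZMod 2) (x : Kan n F) : Prop :=
  homog p x.1 ∧ homog (p + 1) x.2

/-- Even part of an element of `G_n`. -/
def evenP {F : Type} [Field F] {n : ℕ} (f : Gn n F) : Gn n F :=
  fun I => if (I.card : ZMod 2) = 0 then f I else 0

/-- Odd part of an element of `G_n`. -/
def oddP {F : Type} [Field F] {n : ℕ} (f : Gn n F) : Gn n F :=
  fun I => if (I.card : ZMod 2) = 1 then f I else 0

/-- Even part of an element of `Kan(n)`. -/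
def kEvenPart {F : Type} [Field F] {n : ℕ} (x : Kan n F) : Kan n F := (evenP x.1, oddP x.2)

/-- Odd part of an element of `Kan(n)`. -/
def kOddPart {F : Type} [Field F] {n : ℕ} (x : Kan n F) : Kan n F := (oddP x.1, evenP x.2)

/-- A super vector space is encoded as a product `V0 × V1`; homogeneity of parity `p`. -/
def vHomog {V0 V1 : Type} [Zero V0] [Zero V1] (p : ZMod 2) (v : V0 × V1) : Prop :=
  if p = 0 then v.2 = 0 else v.1 = 0

/-- The left action of `Kan(n)` on a superbimodule determined from the right action
`act` by supercommutativity: `a·v = (-1)^{|a||v|} v·a` for homogeneous `a, v`. -/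
def leftAct {F : Type} [Field F] {n : ℕ} {V0 V1 : Type} [AddCommGroup V0] [Module F V0]
    [AddCommGroup V1] [Module F V1]
    (act : V0 × V1 →ₗ[F] Kan n F →ₗ[F] V0 × V1) (x : Kan n F) (w : V0 × V1) : V0 × V1 :=
  act w (kEvenPart x) + act ((w.1, 0) : V0 × V1) (kOddPart x)
    - act ((0, w.2) : V0 × V1) (kOddPart x)

/-- Multiplication in the split null extension `E = Kan(n) ⊕ V`. -/
def emul {F : Type} [Field F] {n : ℕ} {V0 V1 : Type} [AddCommGroup V0] [Module F V0]
    [AddCommGroup V1] [Module F V1]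
    (act : V0 × V1 →ₗ[F] Kan n F →ₗ[F] V0 × V1)
    (z w : Kan n F × (V0 × V1)) : Kan n F × (V0 × V1) :=
  (kmul z.1 w.1, act z.2 w.1 + leftAct act z.1 w.2)

/-- Homogeneity in the split null extension. -/
def eHomog {F : Type} [Field F] {n : ℕ} {V0 V1 : Type} [AddCommGroup V0] [Module F V0]
    [AddCommGroup V1] [Module F V1] (p : ZMod 2) (z : Kan n F × (V0 × V1)) : Prop :=
  kHomog p z.1 ∧ vHomog p z.2

/-- A supercommutative superalgebra structure `mul` (with homogeneity predicate `hom`)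
is Jordan: supercommutativity and the linearized super Jordan identity hold for
homogeneous elements. -/
def JordanSuper (F : Type) [Field F] {E : Type} [AddCommGroup E] [Module F E]
    (hom : ZMod 2 → E → Prop) (mul : E → E → E) : Prop :=
  (∀ (p q : ZMod 2) (x y : E), hom p x → hom q y → mul x y = sgn F (p * q) • mul y x) ∧
  (∀ (px py pz pt : ZMod 2) (x y z t : E),
      hom px x → hom py y → hom pz z → hom pt t →
      mul (mul (mul x y) z) t
        + sgn F (py * pz + py * pt + pz * pt) • mul (mul (mul x t) z) y
        + sgn F (px * py + px * pz + px * pt + pz * pt) • mul (mul (mul y t) z) x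
      = mul (mul x y) (mul z t) + sgn F (py * pz) • mul (mul x z) (mul y t)
        + sgn F (pt * (py + pz)) • mul (mul x t) (mul y z))

/-- `V = V0 ⊕ V1` with right action `act` is a Jordan superbimodule over `Kan(n)`:
the split null extension `Kan(n) ⊕ V` is a (graded) Jordan superalgebra. -/
def IsJordanBimod {F : Type} [Field F] {n : ℕ} {V0 V1 : Type} [AddCommGroup V0] [Module F V0]
    [AddCommGroup V1] [Module F V1]
    (act : V0 × V1 →ₗ[F] Kan n F →ₗ[F] V0 × V1) : Prop :=
  JordanSuper F (E := Kan n F × (V0 × V1)) eHomog (emul act) ∧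
  (∀ (p q : ZMod 2) (z w : Kan n F × (V0 × V1)),
      eHomog p z → eHomog q w → eHomog (p + q) (emul act z w))

section Aux

variable {F : Type} [Field F] {n : ℕ}

open Finset

lemma gmul_zero_left (g : Gn n F) : gmul 0 g = 0 := by
  funext K; simp [gmul]

lemma gmul_zero_right (f : Gn n F) : gmul f 0 = 0 := by
  funext K; simp [gmul]

lemma pd_zero (j : Fin n) : pd j (0 : Gn n F) = 0 := by
  funext I; simp [pd]

lemma gInv_zero : gInv (0 : Gn n F) = 0 := by
  funext I; simp [gInv]

lemma gbr_zero_left (g : Gn n F) : gbr 0 g = 0 := by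
  simp [gbr, gInv_zero, pd_zero, gmul_zero_left]

lemma gbr_zero_right (f : Gn n F) : gbr f 0 = 0 := by
  simp [gbr, pd_zero, gmul_zero_right]

lemma kmul_zero_left (y : Kan n F) : kmul 0 y = 0 := by
  simp [kmul, gmul_zero_left, gbr_zero_left]

lemma kmul_zero_right (x : Kan n F) : kmul x 0 = 0 := by
  simp [kmul, gmul_zero_right, gInv_zero, gbr_zero_right]

lemma gmul_single_self (I : Finset (Fin n)) (hI : I ≠ ∅) :
    gmul (single I : Gn n F) (single I) = 0 := by
  funext K
  apply Finset.sum_eq_zero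
  intro J _
  by_cases h1 : J = I
  · subst h1
    by_cases h2 : K \ J = J
    · exfalso
      have hd : Disjoint J (K \ J) := Finset.disjoint_sdiff
      rw [h2] at hd
      rw [disjoint_self, Finset.bot_eq_empty] at hd
      exact hI hd
    · simp [single, h2]
  · simp [single, h1]

lemma gInv_single (I : Finset (Fin n)) :
    gInv (single I : Gn n F) = ((-1 : F) ^ I.card) • (single I : Gn n F) := by
  funext J
  by_cases h : J = I
  · subst h; simp [gInv, single]
  · simp [gInv, single, h]

lemma pd_smul (j : Fin n) (c : F) (f : Gn n F) : pd j (c • f) = c • pd j f := by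
  funext I
  by_cases h : j ∈ I
  · simp [pd, h]
  · simp [pd, h]; ring

lemma gmul_smul_left (c : F) (f g : Gn n F) : gmul (c • f) g = c • gmul f g := by
  funext K
  rw [Pi.smul_apply, smul_eq_mul, gmul, gmul, Finset.mul_sum]
  apply Finset.sum_congr rfl
  intro J _
  simp only [Pi.smul_apply, smul_eq_mul]; ring

lemma gmul_smul_right (c : F) (f g : Gn n F) : gmul f (c • g) = c • gmul f g := by
  funext K
  rw [Pi.smul_apply, smul_eq_mul, gmul, gmul, Finset.mul_sum]
  apply Finset.sum_congr rfl
  intro J _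
  simp only [Pi.smul_apply, smul_eq_mul]; ring

lemma pd_single_ne (i : Fin n) (I J : Finset (Fin n))
    (h : ¬ (i ∈ I ∧ J = I.erase i)) : pd i (single I : Gn n F) J = 0 := by
  by_cases hiJ : i ∈ J
  · simp [pd, hiJ]
  · have hne : insert i J ≠ I := by
      intro he
      exact h ⟨he ▸ Finset.mem_insert_self i J, by rw [← he, Finset.erase_insert hiJ]⟩
    simp [pd, hiJ, single, hne]

lemma gmul_pd_single (i : Fin n) (I : Finset (Fin n)) (h2 : 2 ≤ I.card) :
    gmul (pd i (single I) : Gn n F) (pd i (single I)) = 0 := by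
  funext K
  apply Finset.sum_eq_zero
  intro J _
  by_cases h : i ∈ I ∧ J = I.erase i
  · by_cases h' : i ∈ I ∧ K \ J = I.erase i
    · exfalso
      have hJ : J = K \ J := h.2.trans h'.2.symm
      have hd : Disjoint J (K \ J) := Finset.disjoint_sdiff
      rw [← hJ, disjoint_self, Finset.bot_eq_empty] at hd
      have hc : (I.erase i).card = I.card - 1 := Finset.card_erase_of_mem h.1
      rw [← h.2, hd] at hc
      simp at hc
      omega
    · rw [pd_single_ne i I _ h', mul_zero]
  · rw [pd_single_ne i I J h, mul_zero, zero_mul]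

lemma gbr_single_self (I : Finset (Fin n)) (h2 : 2 ≤ I.card) :
    gbr (single I : Gn n F) (gInv (single I)) = 0 := by
  apply Finset.sum_eq_zero
  intro i _
  rw [gInv_single, pd_smul, gmul_smul_left, gmul_smul_right,
    gmul_pd_single i I h2]
  simp

lemma kmul_eK_self (I : Finset (Fin n)) (hI : I ≠ ∅) :
    kmul (eK I : Kan n F) (eK I) = 0 := by
  simp [kmul, eK, gmul_single_self I hI, gInv_zero, gmul_zero_left, gmul_zero_right,
    gbr_zero_left]

lemma kmul_beK_self (I : Finset (Fin n)) (h2 : 2 ≤ I.card) :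
    kmul (beK I : Kan n F) (beK I) = 0 := by
  simp [kmul, beK, gInv_zero, gmul_zero_left, gmul_zero_right,
    gbr_single_self I h2]

variable {V0 V1 : Type} [AddCommGroup V0] [Module F V0] [AddCommGroup V1] [Module F V1]
variable (act : V0 × V1 →ₗ[F] Kan n F →ₗ[F] V0 × V1)

lemma kEvenPart_zero : kEvenPart (0 : Kan n F) = 0 := by
  refine Prod.ext ?_ ?_ <;> funext I <;> simp [kEvenPart, evenP, oddP]

lemma kOddPart_zero : kOddPart (0 : Kan n F) = 0 := by
  refine Prod.ext ?_ ?_ <;> funext I <;> simp [kOddPart, evenP, oddP]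

lemma leftAct_zero_right (x : Kan n F) : leftAct act x (0 : V0 × V1) = 0 := by
  simp [leftAct]

lemma leftAct_zero_left (w : V0 × V1) : leftAct act (0 : Kan n F) w = 0 := by
  simp [leftAct, kEvenPart_zero, kOddPart_zero]

lemma emul_zero_left (z : Kan n F × (V0 × V1)) : emul act 0 z = 0 := by
  simp [emul, kmul_zero_left, leftAct_zero_left]

lemma emul_zero_right (z : Kan n F × (V0 × V1)) : emul act z 0 = 0 := by
  simp [emul, kmul_zero_right, leftAct_zero_right]

lemma cube_zero_of_sq_zero (hchar : (2 : F) ≠ 0) (hJ : IsJordanBimod act)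
    (a : Kan n F) (ha : kHomog 0 a) (ha2 : kmul a a = 0) :
    ∀ v : V0 × V1, act (act (act v a) a) a = 0 := by
  have key : ∀ (p : ZMod 2) (v : V0 × V1), vHomog p v →
      act (act (act v a) a) a = 0 := by
    intro p v hv
    have hx : eHomog p (((0 : Kan n F), v) : Kan n F × (V0 × V1)) :=
      ⟨⟨fun I _ => rfl, fun I _ => rfl⟩, hv⟩
    have hy : eHomog 0 (((a, (0 : V0 × V1))) : Kan n F × (V0 × V1)) :=
      ⟨ha, by simp [vHomog]⟩
    have H := hJ.1.2 p 0 0 0 ((0 : Kan n F), v) (a, 0) (a, 0) (a, 0) hx hy hy hy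
    have hvy : ∀ w : V0 × V1, emul act ((0 : Kan n F), w) (a, (0 : V0 × V1))
        = ((0 : Kan n F), act w a) := by
      intro w
      simp [emul, kmul_zero_left, leftAct_zero_left]
    have hyy : emul act ((a, (0 : V0 × V1)) : Kan n F × (V0 × V1)) (a, 0) = 0 := by
      simp [emul, ha2, leftAct_zero_right]
    simp only [hvy, hyy, emul_zero_left, emul_zero_right] at H
    have H2 := congrArg Prod.snd H
    simp only [sgn, mul_zero, zero_mul, add_zero, zero_add, if_pos rfl, if_true,
      one_smul, smul_zero, Prod.snd_add, Prod.snd_zero, Prod.smul_snd] at H2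
    have h2 : (2 : F) • act (act (act v a) a) a = 0 := by
      rw [two_smul]; exact H2
    have := congrArg (fun w => (2 : F)⁻¹ • w) h2
    simpa [smul_smul, inv_mul_cancel₀ hchar] using this
  intro v
  have hv : v = ((v.1, 0) : V0 × V1) + ((0, v.2) : V0 × V1) := by
    refine Prod.ext ?_ ?_ <;> simp
  have e1 := key 0 ((v.1, 0) : V0 × V1) (by simp [vHomog])
  have e2 := key 1 ((0, v.2) : V0 × V1) (by simp [vHomog])
  calc act (act (act v a) a) a
      = act (act (act (((v.1, 0) : V0 × V1) + ((0, v.2) : V0 × V1)) a) a) a := by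
        rw [← hv]
    _ = 0 := by
        rw [map_add, LinearMap.add_apply, map_add, LinearMap.add_apply, map_add,
          LinearMap.add_apply, e1, e2, add_zero]

end Aux

/-- for a Jordan bimodule `V` over `Kan(n)`, every even basis element
`a = e_I` (`|I|` even, `a ≠ 1`) or `a = \bar{e_I}` (`|I|` odd, `|I| ≠ 1`)
satisfies `R_a³ = 0`. -/
theorem even_cube_zero {F : Type} [Field F] (hchar : (2 : F) ≠ 0)
    {n : ℕ} (hn : 2 ≤ n)
    {V0 V1 : Type} [AddCommGroup V0] [Module F V0] [AddCommGroup V1] [Module F V1]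
    (act : V0 × V1 →ₗ[F] Kan n F →ₗ[F] V0 × V1) (hJ : IsJordanBimod act) :
    (∀ I : Finset (Fin n), (I.card : ZMod 2) = 0 → I ≠ ∅ →
      ∀ v : V0 × V1, act (act (act v (eK I)) (eK I)) (eK I) = 0) ∧
    (∀ I : Finset (Fin n), (I.card : ZMod 2) = 1 → I.card ≠ 1 →
      ∀ v : V0 × V1, act (act (act v (beK I)) (beK I)) (beK I) = 0) := by
  constructor
  · intro I hI hne v
    apply cube_zero_of_sq_zero act hchar hJ (eK I) ?_ (kmul_eK_self I hne) v
    refine ⟨?_, fun J _ => rfl⟩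
    intro J hJ'
    simp only [eK, single]
    by_cases h : J = I
    · exact absurd (h ▸ hI) hJ'
    · simp [h]
  · intro I hI hne v
    have hcard : 2 ≤ I.card := by
      rcases Nat.mod_two_eq_zero_or_one I.card with h | h
      · exfalso
        have : (I.card : ZMod 2) = 0 :=
          (ZMod.natCast_eq_zero_iff I.card 2).mpr (Nat.dvd_of_mod_eq_zero h)
        rw [this] at hI
        exact zero_ne_one hI
      · omega
    apply cube_zero_of_sq_zero act hchar hJ (beK I) ?_ (kmul_beK_self I hcard) v
    refine ⟨fun J _ => rfl, ?_⟩
    intro J hJ'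
    simp only [beK, single]
    by_cases h : J = I
    · exact absurd (by rw [h, hI]; ring) hJ'
    · simp [h]
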